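/- Let G be a starlike graph with clique partition (V_0, V_1, …, V_t) and let S be an m-convexly independent set of G. Suppose there is an edge u·v_i of G with u ∈ S ∩ C'_0 and v_i ∈ S ∩ C_i for some i ∈ {0, 1, …, t}. Then S contains no vertex of C'_0 − C'_i, and moreover S − C_i ⊆ C'_i ∪ Y_i. -/

import Mathlib

open SimpleGraph

variable {V : Type*}

/-- The closed neighborhood of a vertex. -/
def closedNbhd (G : SimpleGraph V) (v : V) : Set V := insert v (G.neighborSet v)

/-- A vertex is simplicial if its closed neighborhood induces a complete graph. -/
def IsSimplicial (G : SimpleGraph V) (v : V) : Prop :=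
  ∀ a ∈ closedNbhd G v, ∀ b ∈ closedNbhd G v, a ≠ b → G.Adj a b

/-- `Z`, the set of simplicial vertices of `G`. -/
def simplicialSet (G : SimpleGraph V) : Set V := {v | IsSimplicial G v}

/-- `N(T)`, the union of open neighborhoods of vertices of `T`. -/
def nbhdSet (G : SimpleGraph V) (T : Set V) : Set V := ⋃ v ∈ T, G.neighborSet v

/-- An independent set of vertices. -/
def IsIndepSet' (G : SimpleGraph V) (T : Set V) : Prop :=
  ∀ u ∈ T, ∀ v ∈ T, ¬ G.Adj u v

/-- The difference `d(T) = |T| - |N(T)|` of a set of vertices. -/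
noncomputable def indepDiff (G : SimpleGraph V) (T : Set V) : ℤ :=
  (T.ncard : ℤ) - ((nbhdSet G T).ncard : ℤ)

/-- The critical independence difference `d_c(G)`. -/
noncomputable def critIndepDiff (G : SimpleGraph V) : ℤ :=
  sSup {d : ℤ | ∃ T : Set V, IsIndepSet' G T ∧ d = indepDiff G T}

/-- A walk is an induced path if it is a path and no two non-consecutive vertices
of it are adjacent. -/
def IsInducedPath (G : SimpleGraph V) {a b : V} (p : G.Walk a b) : Prop :=
  p.IsPath ∧ ∀ (i j : ℕ) (hi : i < p.support.length) (hj : j < p.support.length),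
    i + 1 < j → ¬ G.Adj (p.support.get ⟨i, hi⟩) (p.support.get ⟨j, hj⟩)

/-- A set is monophonically convex if it contains every vertex of every induced path
joining two of its vertices. -/
def MonoConvex (G : SimpleGraph V) (S : Set V) : Prop :=
  ∀ ⦃a b : V⦄, a ∈ S → b ∈ S → ∀ p : G.Walk a b, IsInducedPath G p →
    ∀ w ∈ p.support, w ∈ S

/-- The monophonic convex hull of `S`: the smallest monophonically convex set containing `S`. -/
def monoHull (G : SimpleGraph V) (S : Set V) : Set V :=
  ⋂₀ {T : Set V | S ⊆ T ∧ MonoConvex G T}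

/-- A set is monophonically convexly independent if no member is in the hull
of the others. -/
def MConvexIndep (G : SimpleGraph V) (S : Set V) : Prop :=
  ∀ v ∈ S, v ∉ monoHull G (S \ {v})

/-- The monophonic rank: the largest size of an m-convexly independent set. -/
noncomputable def monoRank (G : SimpleGraph V) : ℕ :=
  sSup {n : ℕ | ∃ S : Set V, MConvexIndep G S ∧ n = S.ncard}

/-- A starlike partition of a graph: a partition of the vertex set into cliques
`V_0, V_1, …, V_t` such that `V_0` is a maximal clique and, for `i ≥ 1`,
all vertices of `V_i` have the same closed neighborhood outside `V_i`,
contained in `V_0`. -/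
structure IsStarlikePartition (G : SimpleGraph V) (t : ℕ) (Vp : Fin (t+1) → Set V) : Prop where
  nonempty : ∀ i, (Vp i).Nonempty
  disjoint : ∀ i j, i ≠ j → Disjoint (Vp i) (Vp j)
  covers : ∀ v : V, ∃ i, v ∈ Vp i
  cliques : ∀ i, G.IsClique (Vp i)
  maximal : ∀ T : Set V, G.IsClique T → Vp 0 ⊆ T → T ⊆ Vp 0
  nbhd_eq : ∀ i : Fin (t+1), i ≠ 0 → ∀ u ∈ Vp i, ∀ v ∈ Vp i,
    closedNbhd G u \ Vp i = closedNbhd G v \ Vp i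
  nbhd_sub : ∀ i : Fin (t+1), i ≠ 0 → ∀ u ∈ Vp i, closedNbhd G u \ Vp i ⊆ Vp 0

/-- `X_i`: the maximal clique containing `V_i` (`X_0 = V_0`; for `i ≥ 1` it is
the closed neighborhood of any vertex of `V_i`). -/
def Xset (G : SimpleGraph V) {t : ℕ} (Vp : Fin (t+1) → Set V) (i : Fin (t+1)) : Set V :=
  if i = 0 then Vp 0 else ⋃ u ∈ Vp i, closedNbhd G u

/-- `C_i = X_i ∩ Z`. -/
def Cset (G : SimpleGraph V) {t : ℕ} (Vp : Fin (t+1) → Set V) (i : Fin (t+1)) : Set V :=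
  Xset G Vp i ∩ simplicialSet G

/-- `C'_i = X_i − C_i`. -/
def Cset' (G : SimpleGraph V) {t : ℕ} (Vp : Fin (t+1) → Set V) (i : Fin (t+1)) : Set V :=
  Xset G Vp i \ Cset G Vp i

/-- `Y_i`: the union of the sets `C_j`, over `j ≠ i` with `C'_j ⊆ C'_i`. -/
def Yset (G : SimpleGraph V) {t : ℕ} (Vp : Fin (t+1) → Set V) (i : Fin (t+1)) : Set V :=
  ⋃ j ∈ {j : Fin (t+1) | j ≠ i ∧ Cset' G Vp j ⊆ Cset' G Vp i}, Cset G Vp j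

open scoped Classical in
/-- The vertex set of the split graph `G_i`: if `|N(Y_i) − Y_i| = |C'_i| − 1` and
`|Y_i| ≥ |C'_i| − 1` then `(C'_i − {x}) ∪ Y_i` where `{x} = C'_i − N(Y_i)`
(so that `C'_i − {x} = C'_i ∩ N(Y_i)`), otherwise `C'_i ∪ Y_i`. -/
noncomputable def Wset (G : SimpleGraph V) {t : ℕ} (Vp : Fin (t+1) → Set V)
    (i : Fin (t+1)) : Set V :=
  if (((nbhdSet G (Yset G Vp i) \ Yset G Vp i).ncard : ℤ) = ((Cset' G Vp i).ncard : ℤ) - 1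
      ∧ ((Yset G Vp i).ncard : ℤ) ≥ ((Cset' G Vp i).ncard : ℤ) - 1)
  then (Cset' G Vp i ∩ nbhdSet G (Yset G Vp i)) ∪ Yset G Vp i
  else Cset' G Vp i ∪ Yset G Vp i

/-- The induced subgraph on `W` with all edges inside `Y` deleted. -/
def inducedMinusY (G : SimpleGraph V) (W Y : Set V) : SimpleGraph ↥W where
  Adj a b := G.Adj a b ∧ ¬((a : V) ∈ Y ∧ (b : V) ∈ Y)
  symm := by
    constructor
    intro a b h
    exact ⟨h.1.symm, fun hc => h.2 ⟨hc.2, hc.1⟩⟩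
  loopless := by
    constructor
    intro a h
    exact G.loopless.irrefl a h.1

/-- The split graph `G_i = G[W_i] − E(G[Y_i])`. -/
noncomputable def Gsplit (G : SimpleGraph V) {t : ℕ} (Vp : Fin (t+1) → Set V)
    (i : Fin (t+1)) : SimpleGraph ↥(Wset G Vp i) :=
  inducedMinusY G (Wset G Vp i) (Yset G Vp i)

/-!
Since `v_i` is simplicial, `N[v_i] = X_i`. If a vertex `w ∈ S` outside `X_i` were adjacent to
`u`, or adjacent to some `z ∉ X_i` that is adjacent to `u`, then `w u v_i` or `w z u v_i` would
be an induced path, putting `u` in the hull of `S − {u}`. Every non-simplicial vertex lies in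
the clique `V_0 ∋ u`, which rules out `C'_0 − C'_i` directly. A vertex `w ∈ S` outside
`C_i ∪ C'_i ∪ Y_i` is then simplicial, so `w ∈ C_j` with `C'_j ⊈ C'_i`, and a vertex
`z ∈ C'_j − C'_i` is a common neighbour of `w` and `u` outside `X_i`.
-/

section

variable {G : SimpleGraph V}

lemma mem_monoHull_of_mem_support {S : Set V} {a b x : V} (ha : a ∈ S) (hb : b ∈ S)
    (p : G.Walk a b) (hp : IsInducedPath G p) (hx : x ∈ p.support) :
    x ∈ monoHull G S := by
  rw [monoHull, Set.mem_sInter]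
  rintro T ⟨hST, hT⟩
  exact hT (hST ha) (hST hb) p hp x hx

lemma MConvexIndep.eq_or_eq_of_mem_support {S : Set V} (hS : MConvexIndep G S)
    {a b x : V} (ha : a ∈ S) (hb : b ∈ S) (hx : x ∈ S)
    (p : G.Walk a b) (hp : IsInducedPath G p) (hxp : x ∈ p.support) : x = a ∨ x = b := by
  by_contra! h
  exact hS x hx (mem_monoHull_of_mem_support ⟨ha, h.1.symm⟩ ⟨hb, h.2.symm⟩ p hp hxp)

lemma isInducedPath_cons_cons_nil {a b c : V} (hab : G.Adj a b) (hbc : G.Adj b c)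
    (hac : ¬ G.Adj a c) (hac' : a ≠ c) :
    IsInducedPath G (Walk.cons hab (Walk.cons hbc Walk.nil)) := by
  constructor
  · simp [Walk.isPath_def, hab.ne, hbc.ne, hac']
  · intro i j hi hj hij
    have hj' : j < 3 := by simpa using hj
    obtain ⟨rfl, rfl⟩ : i = 0 ∧ j = 2 := by omega
    exact hac

lemma isInducedPath_cons_cons_cons_nil {a b c d : V} (hab : G.Adj a b) (hbc : G.Adj b c)
    (hcd : G.Adj c d) (hac : ¬ G.Adj a c) (had : ¬ G.Adj a d) (hbd : ¬ G.Adj b d)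
    (hac' : a ≠ c) (had' : a ≠ d) (hbd' : b ≠ d) :
    IsInducedPath G (Walk.cons hab (Walk.cons hbc (Walk.cons hcd Walk.nil))) := by
  constructor
  · simp [Walk.isPath_def, hab.ne, hbc.ne, hcd.ne, hac', had', hbd']
  · intro i j hi hj hij
    have hj' : j < 4 := by simpa using hj
    obtain ⟨rfl, rfl⟩ | ⟨rfl, rfl⟩ | ⟨rfl, rfl⟩ :
        (i = 0 ∧ j = 2) ∨ (i = 0 ∧ j = 3) ∨ (i = 1 ∧ j = 3) := by omega
    · exact hac
    · exact had
    · exact hbd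

lemma adj_of_mem_closedNbhd {a b : V} (hb : b ∈ closedNbhd G a) (hne : b ≠ a) :
    G.Adj a b :=
  (Set.mem_insert_iff.mp hb).resolve_left hne

lemma mem_closedNbhd_of_adj {a b : V} (h : G.Adj a b) : b ∈ closedNbhd G a :=
  Set.mem_insert_of_mem _ h

namespace MConvexIndep

variable {S : Set V} {u v w : V}

lemma not_adj_of_notMem_closedNbhd (hS : MConvexIndep G S) (hu : u ∈ S) (hv : v ∈ S)
    (huv : G.Adj u v) (hw : w ∈ S) (hwv : w ∉ closedNbhd G v) : ¬ G.Adj w u := by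
  intro hwu
  rcases hS.eq_or_eq_of_mem_support hw hv hu _
      (isInducedPath_cons_cons_nil hwu huv (fun h => hwv (mem_closedNbhd_of_adj h.symm))
        (fun h => hwv (h ▸ Set.mem_insert _ _))) (by simp) with h | h
  · exact hwu.ne h.symm
  · exact huv.ne h

lemma not_adj_of_adj_of_notMem_closedNbhd (hS : MConvexIndep G S) (hu : u ∈ S)
    (hv : v ∈ S) (huv : G.Adj u v) (hw : w ∈ S) (hwv : w ∉ closedNbhd G v) {z : V}
    (hzv : z ∉ closedNbhd G v) (hwz : G.Adj w z) : ¬ G.Adj z u := by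
  intro hzu
  have hwu' : w ≠ u := fun h => hwv (h ▸ mem_closedNbhd_of_adj huv.symm)
  rcases hS.eq_or_eq_of_mem_support hw hv hu _
      (isInducedPath_cons_cons_cons_nil hwz hzu huv
        (hS.not_adj_of_notMem_closedNbhd hu hv huv hw hwv)
        (fun h => hwv (mem_closedNbhd_of_adj h.symm))
        (fun h => hzv (mem_closedNbhd_of_adj h.symm))
        hwu' (fun h => hwv (h ▸ Set.mem_insert _ _)) (fun h => hzv (h ▸ Set.mem_insert _ _)))
      (by simp) with h | h
  · exact hwu' h.symm
  · exact huv.ne h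

end MConvexIndep

lemma SimpleGraph.IsClique.subset_closedNbhd {s : Set V} (hs : G.IsClique s) {a : V}
    (ha : a ∈ s) : s ⊆ closedNbhd G a := by
  intro b hb
  rcases eq_or_ne b a with rfl | hne
  · exact Set.mem_insert _ _
  · exact mem_closedNbhd_of_adj (hs ha hb hne.symm)

lemma mem_Cset'_iff {t : ℕ} {Vp : Fin (t+1) → Set V} {i : Fin (t+1)} {x : V} :
    x ∈ Cset' G Vp i ↔ x ∈ Xset G Vp i ∧ ¬ IsSimplicial G x := by
  simp [Cset', Cset, simplicialSet]

lemma notMem_Xset_of_notMem_Cset' {t : ℕ} {Vp : Fin (t+1) → Set V} {i : Fin (t+1)} {x : V}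
    (hx : x ∉ Cset' G Vp i) (hs : ¬ IsSimplicial G x) : x ∉ Xset G Vp i :=
  fun h => hx (mem_Cset'_iff.mpr ⟨h, hs⟩)

lemma Xset_subset_Cset_union_Cset' {t : ℕ} (Vp : Fin (t+1) → Set V) (i : Fin (t+1)) :
    Xset G Vp i ⊆ Cset G Vp i ∪ Cset' G Vp i :=
  (Set.subset_sdiff_union _ _).trans (Set.union_comm _ _).le

lemma Xset_zero {t : ℕ} (Vp : Fin (t+1) → Set V) : Xset G Vp 0 = Vp 0 := if_pos rfl

namespace IsStarlikePartition

variable {t : ℕ} {Vp : Fin (t+1) → Set V}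

lemma closedNbhd_eq_Xset (hstar : IsStarlikePartition G t Vp) {j : Fin (t+1)}
    (hj : j ≠ 0) {a : V} (ha : a ∈ Vp j) : closedNbhd G a = Xset G Vp j := by
  rw [Xset, if_neg hj]
  refine (Set.subset_biUnion_of_mem ha).antisymm ?_
  simp only [Set.iUnion_subset_iff]
  intro b hb x hxb
  by_cases hxV : x ∈ Vp j
  · exact (hstar.cliques j).subset_closedNbhd ha hxV
  · exact ((hstar.nbhd_eq j hj b hb a ha) ▸ ⟨hxb, hxV⟩ : x ∈ closedNbhd G a \ Vp j).1

lemma Vp_subset_Xset (hstar : IsStarlikePartition G t Vp) (j : Fin (t+1)) :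
    Vp j ⊆ Xset G Vp j := by
  rcases eq_or_ne j 0 with rfl | hj
  · exact (Xset_zero Vp).ge
  · intro a ha
    rw [← hstar.closedNbhd_eq_Xset hj ha]
    exact Set.mem_insert _ _

lemma isClique_Xset (hstar : IsStarlikePartition G t Vp) (j : Fin (t+1)) :
    G.IsClique (Xset G Vp j) := by
  rcases eq_or_ne j 0 with rfl | hj
  · rw [Xset_zero]; exact hstar.cliques 0
  obtain ⟨a, ha⟩ := hstar.nonempty j
  rw [← hstar.closedNbhd_eq_Xset hj ha]
  have hout : ∀ x ∈ Vp j, ∀ y ∈ closedNbhd G a, y ∉ Vp j → G.Adj x y := by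
    intro x hx y hy hyV
    have hy' : y ∈ closedNbhd G x \ Vp j := by
      rw [hstar.nbhd_eq j hj x hx a ha]; exact ⟨hy, hyV⟩
    exact adj_of_mem_closedNbhd hy'.1 (fun h => hyV (h ▸ hx))
  intro x hx y hy hxy
  by_cases hxV : x ∈ Vp j <;> by_cases hyV : y ∈ Vp j
  · exact hstar.cliques j hxV hyV hxy
  · exact hout x hxV y hy hyV
  · exact (hout y hyV x hx hxV).symm
  · exact hstar.cliques 0 (hstar.nbhd_sub j hj a ha ⟨hx, hxV⟩)
      (hstar.nbhd_sub j hj a ha ⟨hy, hyV⟩) hxy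

lemma isSimplicial_of_mem (hstar : IsStarlikePartition G t Vp) {j : Fin (t+1)}
    (hj : j ≠ 0) {a : V} (ha : a ∈ Vp j) : IsSimplicial G a := by
  intro x hx y hy hxy
  rw [hstar.closedNbhd_eq_Xset hj ha] at hx hy
  exact hstar.isClique_Xset j hx hy hxy

lemma mem_Vp_zero_of_not_isSimplicial (hstar : IsStarlikePartition G t Vp) {a : V}
    (ha : ¬ IsSimplicial G a) : a ∈ Vp 0 := by
  obtain ⟨j, hj⟩ := hstar.covers a
  rcases eq_or_ne j 0 with rfl | hj0
  · exact hj
  · exact absurd (hstar.isSimplicial_of_mem hj0 hj) ha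

lemma mem_Cset'_zero_of_not_isSimplicial (hstar : IsStarlikePartition G t Vp) {a : V}
    (ha : ¬ IsSimplicial G a) : a ∈ Cset' G Vp 0 :=
  mem_Cset'_iff.mpr ⟨(Xset_zero Vp).ge (hstar.mem_Vp_zero_of_not_isSimplicial ha), ha⟩

lemma Cset'_subset_Vp_zero (hstar : IsStarlikePartition G t Vp) (j : Fin (t+1)) :
    Cset' G Vp j ⊆ Vp 0 :=
  fun _ ha => hstar.mem_Vp_zero_of_not_isSimplicial (mem_Cset'_iff.mp ha).2

lemma closedNbhd_eq_Vp_zero (hstar : IsStarlikePartition G t Vp) {v : V}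
    (hv : v ∈ Vp 0) (hs : IsSimplicial G v) : closedNbhd G v = Vp 0 :=
  (hstar.maximal _ (fun _ hx _ hy hxy => hs _ hx _ hy hxy)
    ((hstar.cliques 0).subset_closedNbhd hv)).antisymm ((hstar.cliques 0).subset_closedNbhd hv)

lemma closedNbhd_eq_Xset_of_mem_Cset (hstar : IsStarlikePartition G t Vp) {i : Fin (t+1)}
    {v : V} (hv : v ∈ Cset G Vp i) : closedNbhd G v = Xset G Vp i := by
  obtain ⟨hvX, hvZ⟩ := hv
  rcases eq_or_ne i 0 with rfl | hi
  · rw [Xset_zero] at hvX ⊢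
    exact hstar.closedNbhd_eq_Vp_zero hvX hvZ
  by_cases hvVi : v ∈ Vp i
  · exact hstar.closedNbhd_eq_Xset hi hvVi
  -- a simplicial `v ∈ X_i − V_i` would lie in `V_0` and have `N[v] = V_0`, yet see `V_i`
  exfalso
  obtain ⟨a, ha⟩ := hstar.nonempty i
  rw [← hstar.closedNbhd_eq_Xset hi ha] at hvX
  have hvV0 : v ∈ Vp 0 := hstar.nbhd_sub i hi a ha ⟨hvX, hvVi⟩
  have haN : a ∈ closedNbhd G v :=
    mem_closedNbhd_of_adj (adj_of_mem_closedNbhd hvX (fun h => hvVi (h ▸ ha))).symm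
  rw [hstar.closedNbhd_eq_Vp_zero hvV0 hvZ] at haN
  exact Set.disjoint_left.mp (hstar.disjoint i 0 hi) ha haN

end IsStarlikePartition

end

theorem statement12_general (G : SimpleGraph V) (t : ℕ) (Vp : Fin (t+1) → Set V)
    (hstar : IsStarlikePartition G t Vp) (S : Set V) (hS : MConvexIndep G S)
    (i : Fin (t+1)) (u vi : V)
    (hu : u ∈ S ∩ Cset' G Vp 0) (hvi : vi ∈ S ∩ Cset G Vp i) (huvi : G.Adj u vi) :
    S ∩ (Cset' G Vp 0 \ Cset' G Vp i) = ∅ ∧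
    S \ Cset G Vp i ⊆ Cset' G Vp i ∪ Yset G Vp i := by
  obtain ⟨huS, huC⟩ := hu
  have hXi : closedNbhd G vi = Xset G Vp i := hstar.closedNbhd_eq_Xset_of_mem_Cset hvi.2
  have huXi : u ∈ Xset G Vp i := hXi ▸ mem_closedNbhd_of_adj huvi.symm
  have adj_u : ∀ z ∈ Vp 0, z ∉ Xset G Vp i → G.Adj z u := fun z hz hzX =>
    hstar.cliques 0 hz (hstar.Cset'_subset_Vp_zero 0 huC) (fun h => hzX (h ▸ huXi))
  have hC'0 : S ∩ (Cset' G Vp 0 \ Cset' G Vp i) = ∅ := by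
    refine Set.eq_empty_of_forall_notMem fun w ⟨hwS, hwC0, hwCi⟩ => ?_
    have hwXi := notMem_Xset_of_notMem_Cset' hwCi (mem_Cset'_iff.mp hwC0).2
    exact hS.not_adj_of_notMem_closedNbhd huS hvi.1 huvi hwS (hXi ▸ hwXi)
      (adj_u w (hstar.Cset'_subset_Vp_zero 0 hwC0) hwXi)
  refine ⟨hC'0, fun w ⟨hwS, hwCi⟩ => by_contra fun hw => ?_⟩
  rw [Set.mem_union, not_or] at hw
  have hwXi : w ∉ Xset G Vp i := fun h =>
    (Xset_subset_Cset_union_Cset' Vp i h).elim hwCi hw.1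
  have hws : IsSimplicial G w := by_contra fun hs =>
    hC'0.subset ⟨hwS, hstar.mem_Cset'_zero_of_not_isSimplicial hs, hw.1⟩
  obtain ⟨j, hwVj⟩ := hstar.covers w
  have hwCj : w ∈ Cset G Vp j := ⟨hstar.Vp_subset_Xset j hwVj, hws⟩
  have hji : ¬ Cset' G Vp j ⊆ Cset' G Vp i := fun hsub =>
    hw.2 (Set.mem_biUnion ⟨fun h => hwXi (h ▸ hwCj.1), hsub⟩ hwCj)
  obtain ⟨z, hzCj, hzCi⟩ := Set.not_subset.mp hji
  obtain ⟨hzXj, hzs⟩ := mem_Cset'_iff.mp hzCj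
  have hzXi := notMem_Xset_of_notMem_Cset' hzCi hzs
  have hwz : G.Adj w z := adj_of_mem_closedNbhd
    (hstar.closedNbhd_eq_Xset_of_mem_Cset hwCj ▸ hzXj) (fun h => hzs (h ▸ hws))
  exact hS.not_adj_of_adj_of_notMem_closedNbhd huS hvi.1 huvi hwS (hXi ▸ hwXi)
    (hXi ▸ hzXi) hwz (adj_u z (hstar.Cset'_subset_Vp_zero j hzCj) hzXi)

/-- if `S` is m-convexly independent in a starlike graph and there is an
edge `u·v_i` with `u ∈ S ∩ C'_0` and `v_i ∈ S ∩ C_i`, then `S` contains no vertex of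
`C'_0 − C'_i`, and `S − C_i ⊆ C'_i ∪ Y_i`. -/
theorem statement12 [Fintype V] (G : SimpleGraph V) (t : ℕ) (Vp : Fin (t+1) → Set V)
    (hstar : IsStarlikePartition G t Vp) (S : Set V) (hS : MConvexIndep G S)
    (i : Fin (t+1)) (u vi : V)
    (hu : u ∈ S ∩ Cset' G Vp 0) (hvi : vi ∈ S ∩ Cset G Vp i) (huvi : G.Adj u vi) :
    S ∩ (Cset' G Vp 0 \ Cset' G Vp i) = ∅ ∧
    S \ Cset G Vp i ⊆ Cset' G Vp i ∪ Yset G Vp i :=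
  statement12_general G t Vp hstar S hS i u vi hu hvi huvi
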